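/- Let G_0 be a finite abelian group with subgroups H ≤ G ≤ G_0, let α, β ∈ G_0, and A ⊆ ℤ nonempty with A·α ⊆ β + H. If S is a sequence over the coset α + G of length at least D_A(G/H), then there exist a nonempty subsequence s_1⋯s_r of S and weights w_1,…,w_r ∈ A such that w_1 s_1 + ⋯ + w_r s_r ∈ rβ + H. -/

import Mathlib

/-- Weighted sum of a multiset of (weight, element) pairs. -/
def wSum {G : Type*} [AddCommGroup G] (T : Multiset (ℤ × G)) : G :=
  (T.map fun p => p.1 • p.2).sum

/-- The weighted Davenport constant `D_A(G)`. -/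
noncomputable def DW (A : Set ℤ) (G : Type*) [AddCommGroup G] : ℕ :=
  sInf {ℓ | ∀ S : Multiset G, S.card = ℓ →
    ∃ T : Multiset (ℤ × G), T ≠ 0 ∧ T.map Prod.snd ≤ S ∧ (∀ p ∈ T, p.1 ∈ A) ∧ wSum T = 0}


/-! Translate by `-α`: the terms `s - α` lie in `G`, and since `S` is at least `D_A(G/H)` long,
some nonempty weighted subsequence has `∑ wᵢ (sᵢ - α) ∈ H`. As `wᵢ α - β ∈ H` for every weight,
adding `∑ (wᵢ α - β)` gives `∑ wᵢ sᵢ - r β ∈ H`. -/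

section

variable {Q : Type*} [AddCommGroup Q]

def HasWeightedZeroSum (A : Set ℤ) (S : Multiset Q) : Prop :=
  ∃ T : Multiset (ℤ × Q), T ≠ 0 ∧ T.map Prod.snd ≤ S ∧ (∀ p ∈ T, p.1 ∈ A) ∧ wSum T = 0

theorem HasWeightedZeroSum.mono {A : Set ℤ} {S S' : Multiset Q} (h : HasWeightedZeroSum A S)
    (hS : S ≤ S') : HasWeightedZeroSum A S' :=
  let ⟨T, hT, hTS, hTA, hT0⟩ := h
  ⟨T, hT, hTS.trans hS, hTA, hT0⟩

theorem List.exists_sublist_sum_eq_zero_of_card_le [Fintype Q] (l : List Q)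
    (hl : Fintype.card Q ≤ l.length) : ∃ l', l' ≠ [] ∧ l'.Sublist l ∧ l'.sum = 0 := by
  obtain ⟨i, j, hij, heq⟩ := Fintype.exists_ne_map_eq_of_card_lt
    (fun k : Fin (l.length + 1) => (l.take k).sum) (by simpa using Nat.lt_succ_of_le hl)
  wlog hlt : (i : ℕ) < j generalizing i j
  · exact this j i hij.symm heq.symm (by omega)
  refine ⟨(l.take j).drop i, ?_, (List.drop_sublist _ _).trans (List.take_sublist _ _), ?_⟩
  · rw [← List.length_pos_iff]
    simp only [List.length_drop, List.length_take]
    omega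
  · have hsplit := List.take_append_drop i (l.take j)
    rw [List.take_take, min_eq_left hlt.le] at hsplit
    have hsum := congrArg List.sum hsplit
    rw [List.sum_append, ← heq] at hsum
    exact add_eq_left.mp hsum

theorem Multiset.exists_le_sum_eq_zero_of_card_le [Fintype Q] (S : Multiset Q)
    (hS : Fintype.card Q ≤ S.card) : ∃ t ≤ S, t ≠ 0 ∧ t.sum = 0 := by
  obtain ⟨l, hl, hlS, hl0⟩ := S.toList.exists_sublist_sum_eq_zero_of_card_le (by simpa using hS)
  refine ⟨l, ?_, by simpa using hl, by simpa using hl0⟩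
  simpa using (Multiset.coe_le.2 hlS.subperm : (l : Multiset Q) ≤ S.toList)

theorem hasWeightedZeroSum_of_card_le [Fintype Q] {A : Set ℤ} (hA : A.Nonempty)
    {S : Multiset Q} (hS : Fintype.card Q ≤ S.card) : HasWeightedZeroSum A S := by
  obtain ⟨a, ha⟩ := hA
  obtain ⟨t, htS, ht, ht0⟩ := S.exists_le_sum_eq_zero_of_card_le hS
  refine ⟨t.map (a, ·), by simpa using ht, by simpa using htS, by simp [ha], ?_⟩
  simp [wSum, Multiset.map_map, ← Multiset.smul_sum, ht0]

theorem hasWeightedZeroSum_of_DW_le [Finite Q] {A : Set ℤ} (hA : A.Nonempty)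
    {S : Multiset Q} (hS : DW A Q ≤ S.card) : HasWeightedZeroSum A S := by
  have : Fintype Q := Fintype.ofFinite Q
  -- `|Q|` lies in the set defining `DW A Q`, so its infimum is attained.
  have hDW : ∀ S : Multiset Q, S.card = DW A Q → HasWeightedZeroSum A S :=
    Nat.sInf_mem (s := {ℓ | ∀ S : Multiset Q, S.card = ℓ → HasWeightedZeroSum A S})
      ⟨_, fun S hS => hasWeightedZeroSum_of_card_le hA hS.ge⟩
  refine (hDW (S.toList.take (DW A Q)) ?_).mono ?_
  · simpa using hS
  · simpa using (Multiset.coe_le.2 (S.toList.take_sublist (DW A Q)).subperm :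
      ((S.toList.take (DW A Q) : List Q) : Multiset Q) ≤ S.toList)

end

theorem wSum_map_hom {G G' : Type*} [AddCommGroup G] [AddCommGroup G'] (f : G →+ G')
    (T : Multiset (ℤ × G)) : wSum (T.map (Prod.map id f)) = f (wSum T) := by
  simp [wSum, Multiset.map_map, map_multiset_sum]

theorem wSum_map_add_const_sub_card_smul {G G' : Type*} [AddCommGroup G] [AddCommGroup G']
    (f : G →+ G') (α β : G') (T : Multiset (ℤ × G)) :
    wSum (T.map (Prod.map id fun g => f g + α)) - (T.card : ℤ) • β
      = f (wSum T) + (T.map fun p => p.1 • α - β).sum := by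
  simp [wSum, Multiset.map_map, smul_add, Multiset.sum_map_add, Multiset.sum_map_sub,
    map_multiset_sum, add_sub_assoc]

theorem Multiset.exists_lift_of_map_snd_le {X Y : Type*} (f : X → Y) {S : Multiset X}
    {T' : Multiset (ℤ × Y)} (h : T'.map Prod.snd ≤ S.map f) :
    ∃ T : Multiset (ℤ × X), T.map Prod.snd ≤ S ∧ T.map (Prod.map id f) = T' := by
  classical
  induction T' using Multiset.induction_on generalizing S with
  | empty => exact ⟨0, by simp, by simp⟩
  | cons p T' ih =>
    obtain ⟨w, y⟩ := p
    have hy : y ∈ S.map f :=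
      Multiset.mem_of_le h (Multiset.mem_map_of_mem Prod.snd (Multiset.mem_cons_self (w, y) T'))
    obtain ⟨x, hx, rfl⟩ := Multiset.mem_map.1 hy
    have hle : T'.map Prod.snd ≤ (S.erase x).map f := by
      rw [Multiset.map_erase_of_mem f S hx]
      simpa using Multiset.erase_le_erase (f x) h
    obtain ⟨T, hTS, rfl⟩ := ih hle
    refine ⟨(w, x) ::ₘ T, ?_, by simp⟩
    simpa [Multiset.cons_erase hx] using Multiset.cons_le_cons x hTS

theorem confusing_lemma_general (G₀ : Type*) [AddCommGroup G₀] [Fintype G₀]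
    (G H : AddSubgroup G₀) (α β : G₀)
    (A : Set ℤ) (hA : A.Nonempty) (hAα : ∀ a ∈ A, a • α - β ∈ H)
    (S : Multiset G₀) (hS : ∀ s ∈ S, s - α ∈ G)
    (hlen : DW A (↥G ⧸ H.addSubgroupOf G) ≤ S.card) :
    ∃ T : Multiset (ℤ × G₀), T ≠ 0 ∧ T.map Prod.snd ≤ S ∧ (∀ p ∈ T, p.1 ∈ A) ∧
      wSum T - (T.card : ℤ) • β ∈ H := by
  set π := QuotientAddGroup.mk' (H.addSubgroupOf G)
  set τ : ↥G → G₀ := fun g => G.subtype g + α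
  obtain ⟨S', rfl⟩ : ∃ S' : Multiset G, S'.map τ = S := by
    lift S.map (· - α) to Multiset G using (by simpa using hS) with S' hS'
    refine ⟨S', ?_⟩
    simpa [τ, Multiset.map_map, Function.comp_def] using congrArg (Multiset.map (· + α)) hS'
  obtain ⟨T', hT', hT'S, hT'A, hT'0⟩ :=
    hasWeightedZeroSum_of_DW_le (S := S'.map π) hA (by simpa using hlen)
  obtain ⟨T, hTS', rfl⟩ := Multiset.exists_lift_of_map_snd_le π hT'S
  have hTA : ∀ p ∈ T, p.1 ∈ A := fun p hp => hT'A _ (Multiset.mem_map_of_mem _ hp)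
  have hTH : G.subtype (wSum T) ∈ H := by
    rwa [wSum_map_hom, QuotientAddGroup.mk'_apply, QuotientAddGroup.eq_zero_iff,
      AddSubgroup.mem_addSubgroupOf] at hT'0
  refine ⟨T.map (Prod.map id τ), ?_, ?_, ?_, ?_⟩
  · simpa using hT'
  · simpa [Multiset.map_map, Function.comp_def] using Multiset.map_le_map (f := τ) hTS'
  · intro q hq
    obtain ⟨p, hp, rfl⟩ := Multiset.mem_map.1 hq
    exact hTA p hp
  · rw [Multiset.card_map, wSum_map_add_const_sub_card_smul]
    refine H.add_mem hTH (H.multiset_sum_mem _ fun x hx => ?_)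
    obtain ⟨p, hp, rfl⟩ := Multiset.mem_map.1 hx
    exact hAα p.1 (hTA p hp)

/-- If `A·α ⊆ β + H` and `S` is a sequence over the coset `α + G` of length at
least `D_A(G/H)`, then some nonempty weighted subsequence-sum lies in `rβ + H`. -/
theorem confusing_lemma (G₀ : Type*) [AddCommGroup G₀] [Fintype G₀]
    (G H : AddSubgroup G₀) (hHG : H ≤ G) (α β : G₀)
    (A : Set ℤ) (hA : A.Nonempty) (hAα : ∀ a ∈ A, a • α - β ∈ H)
    (S : Multiset G₀) (hS : ∀ s ∈ S, s - α ∈ G)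
    (hlen : DW A (↥G ⧸ H.addSubgroupOf G) ≤ S.card) :
    ∃ T : Multiset (ℤ × G₀), T ≠ 0 ∧ T.map Prod.snd ≤ S ∧ (∀ p ∈ T, p.1 ∈ A) ∧
      wSum T - (T.card : ℤ) • β ∈ H :=
  confusing_lemma_general G₀ G H α β A hA hAα S hS hlen
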